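/- arXiv:1307.3928 — 2 statements merged into one kernel-verified Lean document; each statement's English description precedes it below -/
import Mathlib

section
/- There is a one-to-one correspondence between totally assigned subgraphs (γ',ν') of the cograph (Γ/γ, μ/ν) and totally assigned subgraphs (γ₁,ν₁) of (Γ,μ) containing (γ,ν), given by restricting ν₁ to edges of γ₁ not internal to γ, with inverse given by adjoining the edges of γ and extending the order compatibly with μ. -/
open scoped Classical TensorProduct

/-- A concrete representative of a totally assigned graph (TAG): a graph with totally
ordered edge set (edges carry the standard labelling `Fin ne`), whose vertices are
natural numbers (the vertex set being the set of endpoints of edges, so that there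
are no isolated vertices). -/
structure PreTAG where
  ne : ℕ
  ends : Fin ne → Sym2 ℕ

/-- Isomorphism of TAG representatives: a bijection of vertices matching up the
edges *preserving the total edge order*. -/
def TagRel (a b : PreTAG) : Prop :=
  ∃ (hm : a.ne = b.ne) (e : ℕ ≃ ℕ),
    ∀ i : Fin a.ne, Sym2.map e (a.ends i) = b.ends (Fin.cast hm i)

theorem tagRel_refl (a : PreTAG) : TagRel a a :=
  ⟨rfl, Equiv.refl ℕ, fun i => by simp⟩

theorem tagRel_symm : ∀ {a b : PreTAG}, TagRel a b → TagRel b a := by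
  rintro a b ⟨hm, e, h⟩
  refine ⟨hm.symm, e.symm, fun j => ?_⟩
  have h2 := h (Fin.cast hm.symm j)
  have h3 : Fin.cast hm (Fin.cast hm.symm j) = j := by ext; simp
  rw [h3] at h2
  rw [← h2, Sym2.map_map]
  simp [Equiv.symm_comp_self]

theorem tagRel_trans : ∀ {a b c : PreTAG}, TagRel a b → TagRel b c → TagRel a c := by
  rintro a b c ⟨hm, e, h⟩ ⟨hm', e', h'⟩
  refine ⟨hm.trans hm', e.trans e', fun i => ?_⟩
  have h2 := h' (Fin.cast hm i)
  have h3 : Fin.cast hm' (Fin.cast hm i) = Fin.cast (hm.trans hm') i := by ext; simp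
  rw [h3] at h2
  rw [← h2, ← h i, Sym2.map_map]
  rfl

instance tagSetoid : Setoid PreTAG :=
  ⟨TagRel, ⟨tagRel_refl, tagRel_symm, tagRel_trans⟩⟩

/-- Totally assigned graphs: isomorphism classes of representatives. -/
def TAGQ := Quotient tagSetoid

/-- The empty TAG, unit of the product. -/
def emptyPre : PreTAG := ⟨0, fun i => i.elim0⟩

/-- Disjoint union of two TAG representatives, with the ordinal sum order on edges
(all edges of `a` come before all edges of `b`); vertices are kept disjoint by
relabelling through `2*·` and `2*·+1`. -/
def mulPre (a b : PreTAG) : PreTAG where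
  ne := a.ne + b.ne
  ends := fun i =>
    match finSumFinEquiv.symm i with
    | Sum.inl j => (a.ends j).map (fun v => 2 * v)
    | Sum.inr j => (b.ends j).map (fun v => 2 * v + 1)

/-- Product of TAGs: disjoint union with the ordinal sum order. -/
noncomputable def mulQ (x y : TAGQ) : TAGQ := ⟦mulPre x.out y.out⟧

/-- The totally assigned subgraph of `a` determined by a subset `S` of its edges:
its edges are those in `S` with the order (and endpoints) induced from `a`. -/
noncomputable def subPre (a : PreTAG) (S : Finset (Fin a.ne)) : PreTAG where
  ne := S.card
  ends := fun j => a.ends (S.orderIsoOfFin rfl j)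

/-- Two vertices are directly linked in the subgraph with edge set `S`. -/
def conRel (a : PreTAG) (S : Finset (Fin a.ne)) : ℕ → ℕ → Prop :=
  fun u v => ∃ i ∈ S, u ∈ a.ends i ∧ v ∈ a.ends i

/-- The contraction (shrinking) `a / S`: each connected component of the subgraph with
edge set `S` is shrunk to a single vertex (the least vertex of the component); the
remaining edges are those not in `S`, with the order induced from `a`. -/
noncomputable def conPre (a : PreTAG) (S : Finset (Fin a.ne)) : PreTAG where
  ne := Sᶜ.card
  ends := fun j =>
    (a.ends (Sᶜ.orderIsoOfFin rfl j)).map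
      (fun v => sInf {u | Relation.EqvGen (conRel a S) u v})

/-- The free vector space spanned by TAGs. -/
abbrev HT (K : Type) [Field K] : Type := TAGQ →₀ K

/-- The unit: the empty TAG. -/
noncomputable def oneH (K : Type) [Field K] : HT K := Finsupp.single ⟦emptyPre⟧ 1

/-- The product of `HT K`, bilinear extension of the product of TAGs. -/
noncomputable def mulLin (K : Type) [Field K] : HT K →ₗ[K] HT K →ₗ[K] HT K :=
  Finsupp.lsum K fun a => LinearMap.smulRight LinearMap.id
    (Finsupp.lsum K fun b => LinearMap.smulRight LinearMap.id
      (Finsupp.single (mulQ a b) 1))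

/-- The product as a map `HT K ⊗ HT K → HT K`. -/
noncomputable def mulMap (K : Type) [Field K] : HT K ⊗[K] HT K →ₗ[K] HT K :=
  TensorProduct.lift (mulLin K)

/-- Coproduct of a single TAG: the sum over all totally assigned subgraphs
(equivalently, over all subsets of the edge set) of subgraph ⊗ contracted graph. -/
noncomputable def deltaT (K : Type) [Field K] (g : TAGQ) : HT K ⊗[K] HT K :=
  ∑ S : Finset (Fin g.out.ne),
    Finsupp.single (⟦subPre g.out S⟧ : TAGQ) (1 : K) ⊗ₜ
      Finsupp.single (⟦conPre g.out S⟧ : TAGQ) (1 : K)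

/-- The coproduct of `HT K`. -/
noncomputable def deltaH (K : Type) [Field K] : HT K →ₗ[K] HT K ⊗[K] HT K :=
  Finsupp.lsum K fun g => LinearMap.smulRight LinearMap.id (deltaT K g)

/-- The counit: coefficient of the empty TAG. -/
noncomputable def epsH (K : Type) [Field K] : HT K →ₗ[K] K :=
  Finsupp.lapply ⟦emptyPre⟧

/-!
Contracting `γ` keeps exactly the edges of `Γ` outside `γ`, in the order induced by `μ`,
so the edges of `Γ/γ` are the image of an order embedding onto the complement of the edge
set `S` of `γ`. A subgraph of `Γ` containing `γ` is then determined by its edges outside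
`S`, and any set of such edges arises: the inverse adjoins the edges of `S`.
-/

theorem Finset.bijective_filter_mem_of_range_eq_compl {α β : Type*} [DecidableEq α]
    [Fintype β] (S : Finset α) (f : β ↪ α) (hf : Set.range f = (↑S)ᶜ) :
    Function.Bijective
      (fun T : {T : Finset α // S ⊆ T} => Finset.univ.filter fun j => f j ∈ T.1) := by
  have hfS : ∀ j, f j ∉ S := fun j =>
    (hf ▸ Set.mem_range_self j : f j ∈ (↑S : Set α)ᶜ)
  rw [Function.bijective_iff_has_inverse]
  refine ⟨fun U => ⟨S ∪ U.map f, Finset.subset_union_left⟩, ?_, ?_⟩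
  · rintro ⟨T, hST⟩
    ext i
    by_cases hi : i ∈ S
    · simp [hi, hST hi]
    · obtain ⟨j, rfl⟩ : i ∈ Set.range f := hf ▸ hi
      simp [hfS]
  · intro U
    ext j
    simp [hfS]

/-- There is a one-to-one correspondence between totally assigned subgraphs of the
cograph `(Γ/γ, μ/ν)` and totally assigned subgraphs of `(Γ,μ)` containing `(γ,ν)`:
the map sending an edge subset `T ⊇ S` of `Γ = a` to the corresponding set of edges
of `Γ/γ` (those edges of `T` not internal to `γ`, i.e. not in `S`) is a bijection. -/
theorem subgraphs_of_cograph_correspondence (a : PreTAG) (S : Finset (Fin a.ne)) :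
    Function.Bijective (fun T : {T : Finset (Fin a.ne) // S ⊆ T} =>
      (Finset.univ.filter fun j : Fin (conPre a S).ne =>
        ((Sᶜ.orderIsoOfFin rfl j : Fin a.ne) ∈ T.1))) :=
  Finset.bijective_filter_mem_of_range_eq_compl S (Sᶜ.orderEmbOfFin rfl).toEmbedding
    (by simp)
end

section
/- The coproduct Δ on the space H of TAGs, defined by Δ(Γ,μ) = Σ over totally assigned subgraphs (γ,ν) ⊆ (Γ,μ) of (γ,ν) ⊗ (Γ/γ, μ/ν), is coassociative: (Δ⊗Id)∘Δ = (Id⊗Δ)∘Δ. -/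
open scoped Classical TensorProduct

/-!
On a representative `Γ`, both sides of coassociativity are sums over pairs of edge sets
`A ⊆ S`: the left side contributes `Γ|_A ⊗ (Γ|_S)/A ⊗ Γ/S`, the right side
`Γ|_A ⊗ (Γ/A)|_{S \ A} ⊗ (Γ/A)/(S \ A)`. The three factors coincide as labelled graphs,
not merely up to isomorphism. The only non-formal point is the third one: `conPre` names a
contracted component by its least vertex, and naming the components of `A` by their least
vertices, then the components formed by the edges of `S \ A` among these names by their least
elements, names each component of `S` by its least vertex.

The coproduct of a representative depends only on its class because a relabelling that is
injective on the (finitely many) vertices extends to a permutation of `ℕ`.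
-/

open Finset Relation

namespace Finset

variable {α : Type*} [LinearOrder α]

def indicesOf (X Y : Finset α) : Finset (Fin X.card) :=
  univ.filter fun j => X.orderEmbOfFin rfl j ∈ Y

@[simp]
lemma mem_indicesOf {X Y : Finset α} {j : Fin X.card} :
    j ∈ X.indicesOf Y ↔ X.orderEmbOfFin rfl j ∈ Y := by
  simp [indicesOf]

lemma map_indicesOf (X Y : Finset α) :
    (X.indicesOf Y).map (X.orderEmbOfFin rfl).toEmbedding = X ∩ Y := by
  ext x
  simp only [mem_map, mem_indicesOf, mem_inter, RelEmbedding.coe_toEmbedding]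
  constructor
  · rintro ⟨j, hj, rfl⟩
    exact ⟨orderEmbOfFin_mem X rfl j, hj⟩
  · rintro ⟨hxX, hxY⟩
    obtain ⟨j, rfl⟩ : x ∈ Set.range (X.orderEmbOfFin rfl) := by
      rwa [range_orderEmbOfFin]
    exact ⟨j, hxY, rfl⟩

lemma card_indicesOf (X Y : Finset α) : (X.indicesOf Y).card = (X ∩ Y).card := by
  rw [← map_indicesOf, card_map]

lemma orderEmbOfFin_indicesOf (X Y : Finset α) (j : Fin (X.indicesOf Y).card) :
    X.orderEmbOfFin rfl ((X.indicesOf Y).orderEmbOfFin rfl j) =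
      (X ∩ Y).orderEmbOfFin (card_indicesOf X Y).symm j := by
  refine congrFun (orderEmbOfFin_unique (card_indicesOf X Y).symm
    (f := fun i => X.orderEmbOfFin rfl ((X.indicesOf Y).orderEmbOfFin rfl i)) (fun i => ?_) ?_) j
  · rw [← map_indicesOf]
    exact mem_map_of_mem _ (orderEmbOfFin_mem _ rfl i)
  · exact (X.orderEmbOfFin rfl).strictMono.comp ((X.indicesOf Y).orderEmbOfFin rfl).strictMono

lemma indicesOf_map (X : Finset α) (T : Finset (Fin X.card)) :
    X.indicesOf (T.map (X.orderEmbOfFin rfl).toEmbedding) = T := by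
  ext j
  simp

lemma compl_indicesOf [Fintype α] (X Y : Finset α) :
    (X.indicesOf Y)ᶜ = X.indicesOf Yᶜ := by
  ext j
  simp

lemma sum_indicesOf_powerset {M : Type*} [AddCommMonoid M] (X : Finset α)
    (F : Finset (Fin X.card) → M) :
    ∑ T, F T = ∑ Y ∈ X.powerset, F (X.indicesOf Y) := by
  refine sum_nbij' (fun T => T.map (X.orderEmbOfFin rfl).toEmbedding) X.indicesOf
    (fun T _ => ?_) (fun _ _ => mem_univ _) (fun T _ => indicesOf_map X T) (fun Y hY => ?_)
    (fun T _ => by rw [indicesOf_map])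
  · rw [mem_powerset, ← indicesOf_map X T, map_indicesOf]
    exact inter_subset_left
  · rw [map_indicesOf, inter_eq_right.2 (mem_powerset.1 hY)]

lemma sum_indicesOf_compl {M : Type*} [Fintype α] [AddCommMonoid M]
    (A : Finset α) (F : Finset (Fin Aᶜ.card) → M) :
    ∑ T, F T = ∑ S with A ⊆ S, F (Aᶜ.indicesOf S) := by
  have hT (T : Finset (Fin Aᶜ.card)) :
      Aᶜ.indicesOf (A ∪ T.map (Aᶜ.orderEmbOfFin rfl).toEmbedding) = T := by
    ext j
    have := mem_compl.1 (orderEmbOfFin_mem Aᶜ rfl j)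
    simp_all
  refine sum_nbij' (fun T => A ∪ T.map (Aᶜ.orderEmbOfFin rfl).toEmbedding) Aᶜ.indicesOf
    (fun T _ => ?_) (fun _ _ => mem_univ _) (fun T _ => hT T) (fun S hS => ?_)
    (fun T _ => by rw [hT])
  · simp
  · rw [map_indicesOf, inter_comm, ← sdiff_eq_inter_compl,
      union_sdiff_of_subset (mem_filter.1 hS).2]

end Finset

namespace Relation

variable {r s : ℕ → ℕ → Prop} {u v : ℕ}

noncomputable def classMin (r : ℕ → ℕ → Prop) (v : ℕ) : ℕ := sInf {u | EqvGen r u v}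

lemma eqvGen_classMin (r : ℕ → ℕ → Prop) (v : ℕ) : EqvGen r (classMin r v) v :=
  Nat.sInf_mem (s := {u | EqvGen r u v}) ⟨v, EqvGen.refl v⟩

lemma classMin_le (h : EqvGen r u v) : classMin r v ≤ u :=
  Nat.sInf_le h

lemma classMin_eq_classMin_iff : classMin r u = classMin r v ↔ EqvGen r u v := by
  refine ⟨fun h => ?_, fun h => ?_⟩
  · have hu := eqvGen_classMin r u
    rw [h] at hu
    exact (hu.symm _ _).trans _ _ _ (eqvGen_classMin r v)
  · unfold classMin
    congr 1
    ext w
    exact ⟨fun hw => hw.trans _ _ _ h, fun hw => hw.trans _ _ _ h.symm⟩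

lemma classMin_classMin (r : ℕ → ℕ → Prop) (v : ℕ) : classMin r (classMin r v) = classMin r v :=
  classMin_eq_classMin_iff.2 (eqvGen_classMin r v)

lemma EqvGen.map_of_imp {α β : Type*} {r : α → α → Prop} {s : β → β → Prop} {f : α → β}
    (h : ∀ x y, r x y → EqvGen s (f x) (f y)) {x y : α} (hxy : EqvGen r x y) :
    EqvGen s (f x) (f y) := by
  induction hxy with
  | rel x y hr => exact h x y hr
  | refl x => exact EqvGen.refl _
  | symm x y _ ih => exact ih.symm _ _
  | trans x y z _ _ ih₁ ih₂ => exact ih₁.trans _ _ _ ih₂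

lemma eqvGen_map_equiv_iff {α β : Type*} {r : α → α → Prop} (e : α ≃ β) {x y : α} :
    EqvGen (Relation.Map r e e) (e x) (e y) ↔ EqvGen r x y := by
  refine ⟨fun h => ?_, EqvGen.map_of_imp fun x y hxy => EqvGen.rel _ _ ⟨x, y, hxy, rfl, rfl⟩⟩
  simpa using EqvGen.map_of_imp (f := e.symm) (s := r)
    (fun _ _ ⟨x, y, hxy, hx, hy⟩ => by simpa [← hx, ← hy] using EqvGen.rel _ _ hxy) h

lemma classMin_map_equiv_eq_iff (e : ℕ ≃ ℕ) :
    classMin (Relation.Map r e e) (e u) = classMin (Relation.Map r e e) (e v) ↔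
      classMin r u = classMin r v := by
  rw [classMin_eq_classMin_iff, classMin_eq_classMin_iff, eqvGen_map_equiv_iff]

lemma eqvGen_le_eqvGen_sup (r s : ℕ → ℕ → Prop) : EqvGen r ≤ EqvGen (r ⊔ s) :=
  EqvGen.mono le_sup_left

lemma eqvGen_map_classMin_of_eqvGen_sup (h : EqvGen (r ⊔ s) u v) :
    EqvGen (Relation.Map s (classMin r) (classMin r)) (classMin r u) (classMin r v) := by
  refine EqvGen.map_of_imp (fun x y hxy => hxy.elim (fun hr => ?_) fun hs => ?_) h
  · rw [classMin_eq_classMin_iff.2 (EqvGen.rel _ _ hr)]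
    exact EqvGen.refl _
  · exact EqvGen.rel _ _ ⟨x, y, hs, rfl, rfl⟩

lemma eqvGen_sup_of_eqvGen_map_classMin
    (h : EqvGen (Relation.Map s (classMin r) (classMin r)) u v) : EqvGen (r ⊔ s) u v := by
  rw [← (EqvGen.is_equivalence (r ⊔ s)).eqvGen_eq]
  refine EqvGen.mono (fun _ _ hm => ?_) _ _ h
  obtain ⟨x, y, hxy, rfl, rfl⟩ := hm
  exact ((eqvGen_le_eqvGen_sup r s _ _ (eqvGen_classMin r x)).trans _ _ _
    (EqvGen.rel _ _ (Or.inr hxy))).trans _ _ _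
    (eqvGen_le_eqvGen_sup r s _ _ (eqvGen_classMin r y)).symm

lemma classMin_map_classMin (r s : ℕ → ℕ → Prop) :
    classMin (Relation.Map s (classMin r) (classMin r)) ∘ classMin r = classMin (r ⊔ s) := by
  funext v
  have hfix : classMin r (classMin (r ⊔ s) v) = classMin (r ⊔ s) v :=
    le_antisymm (classMin_le (EqvGen.refl _)) (classMin_le <|
      (eqvGen_le_eqvGen_sup r s _ _ (eqvGen_classMin r _)).trans _ _ _ (eqvGen_classMin _ v))
  apply le_antisymm
  · exact classMin_le (hfix ▸ eqvGen_map_classMin_of_eqvGen_sup (eqvGen_classMin _ v))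
  · exact classMin_le ((eqvGen_sup_of_eqvGen_map_classMin (eqvGen_classMin _ _)).trans _ _ _
      (eqvGen_le_eqvGen_sup r s _ _ (eqvGen_classMin r v)))

end Relation

namespace PreTAG

lemma ext_of_ends {a b : PreTAG} (h : a.ne = b.ne)
    (H : ∀ i, a.ends i = b.ends (Fin.cast h i)) : a = b := by
  obtain ⟨n, ea⟩ := a
  obtain ⟨m, eb⟩ := b
  obtain rfl : n = m := h
  obtain rfl : ea = eb := funext H
  rfl

def map (f : ℕ → ℕ) (a : PreTAG) : PreTAG := ⟨a.ne, fun i => (a.ends i).map f⟩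

lemma map_map (f g : ℕ → ℕ) (a : PreTAG) : (a.map f).map g = a.map (g ∘ f) := by
  simp only [map, Sym2.map_map]

def vertices (a : PreTAG) : Finset ℕ := univ.biUnion fun i => (a.ends i).toFinset

lemma mem_vertices {a : PreTAG} {v : ℕ} : v ∈ a.vertices ↔ ∃ i, v ∈ a.ends i := by
  simp [vertices, Sym2.mem_toFinset]

lemma vertices_map_subset (f : ℕ → ℕ) (a : PreTAG) : ↑(a.map f).vertices ⊆ Set.range f := by
  intro v hv
  obtain ⟨i, hi⟩ := mem_vertices.1 hv
  obtain ⟨u, -, rfl⟩ := Sym2.mem_map.1 hi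
  exact ⟨u, rfl⟩

theorem mk_map_of_injOn {a : PreTAG} {f : ℕ → ℕ} (hf : Set.InjOn f a.vertices) :
    (⟦a.map f⟧ : TAGQ) = ⟦a⟧ := by
  obtain ⟨e, he⟩ := Cardinal.extend_function_of_lt ⟨_, hf.injective⟩
    ((Cardinal.lt_aleph0_of_finite _).trans_eq Cardinal.mk_nat.symm) ⟨Equiv.refl ℕ⟩
  exact Quotient.sound <| tagRel_symm
    ⟨rfl, e, fun i => Sym2.map_congr fun v hv => he ⟨v, mem_vertices.2 ⟨i, hv⟩⟩⟩

lemma subPre_subPre (a : PreTAG) (X Y : Finset (Fin a.ne)) :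
    subPre (subPre a X) (X.indicesOf Y) = subPre a (X ∩ Y) := by
  refine ext_of_ends (card_indicesOf X Y) fun (j : Fin (X.indicesOf Y).card) => ?_
  change a.ends (X.orderEmbOfFin rfl ((X.indicesOf Y).orderEmbOfFin rfl j)) =
    a.ends ((X ∩ Y).orderEmbOfFin rfl _)
  rw [orderEmbOfFin_indicesOf]
  exact congrArg a.ends (orderEmbOfFin_eq_orderEmbOfFin_iff.2 rfl)

lemma conRel_map (f : ℕ → ℕ) (a : PreTAG) (S : Finset (Fin a.ne)) :
    conRel (a.map f) S = Relation.Map (conRel a S) f f := by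
  ext u v
  simp only [conRel, map, Sym2.mem_map, Relation.Map]
  constructor
  · rintro ⟨i, hi, ⟨x, hx, rfl⟩, ⟨y, hy, rfl⟩⟩
    exact ⟨x, y, ⟨i, hi, hx, hy⟩, rfl, rfl⟩
  · rintro ⟨x, y, ⟨i, hi, hx, hy⟩, rfl, rfl⟩
    exact ⟨i, hi, ⟨x, hx, rfl⟩, ⟨y, hy, rfl⟩⟩

lemma conRel_subPre (a : PreTAG) (X Y : Finset (Fin a.ne)) :
    conRel (subPre a X) (X.indicesOf Y) = conRel a (X ∩ Y) := by
  ext u v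
  simp only [conRel, subPre, ← map_indicesOf X Y, mem_map, RelEmbedding.coe_toEmbedding]
  constructor
  · rintro ⟨j, hj, hu, hv⟩
    exact ⟨_, ⟨j, hj, rfl⟩, hu, hv⟩
  · rintro ⟨_, ⟨j, hj, rfl⟩, hu, hv⟩
    exact ⟨j, hj, hu, hv⟩

lemma conRel_union (a : PreTAG) (X Y : Finset (Fin a.ne)) :
    conRel a (X ∪ Y) = conRel a X ⊔ conRel a Y := by
  ext u v
  simp only [conRel, mem_union, Pi.sup_apply, sup_Prop_eq]
  grind

section

-- The `rfl` steps below unfold `conPre b T` to `(subPre b Tᶜ).map (classMin (conRel b T))`.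
variable (a : PreTAG)

lemma subPre_conPre (A Y : Finset (Fin a.ne)) :
    subPre (conPre a A) (Aᶜ.indicesOf Y) = (subPre a (Aᶜ ∩ Y)).map (classMin (conRel a A)) :=
  congrArg (map _) (subPre_subPre a Aᶜ Y)

lemma conRel_conPre (A Y : Finset (Fin a.ne)) :
    conRel (conPre a A) (Aᶜ.indicesOf Y) =
      Relation.Map (conRel a (Aᶜ ∩ Y)) (classMin (conRel a A)) (classMin (conRel a A)) :=
  (conRel_map _ _ _).trans (congrArg (Relation.Map · _ _) (conRel_subPre a Aᶜ Y))

lemma conPre_subPre (X Y : Finset (Fin a.ne)) :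
    conPre (subPre a X) (X.indicesOf Y) =
      (subPre a (X ∩ Yᶜ)).map (classMin (conRel a (X ∩ Y))) := by
  have h := subPre_subPre a X Yᶜ
  rw [← compl_indicesOf] at h
  rw [← h, ← conRel_subPre]
  rfl

lemma conPre_conPre (A Y : Finset (Fin a.ne)) :
    conPre (conPre a A) (Aᶜ.indicesOf Y) =
      (subPre a (Aᶜ ∩ Yᶜ)).map (classMin (Relation.Map (conRel a (Aᶜ ∩ Y))
        (classMin (conRel a A)) (classMin (conRel a A))) ∘ classMin (conRel a A)) := by
  have h := subPre_conPre a A Yᶜ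
  rw [← compl_indicesOf] at h
  rw [← map_map, ← h, ← conRel_conPre]
  rfl

lemma conPre_map (f : ℕ → ℕ) (S : Finset (Fin a.ne)) :
    conPre (a.map f) S = (subPre a Sᶜ).map (classMin (Relation.Map (conRel a S) f f) ∘ f) := by
  rw [← conRel_map, ← map_map]
  rfl

variable {a} {A S : Finset (Fin a.ne)}

lemma subPre_subPre_of_subset (h : A ⊆ S) : subPre (subPre a S) (S.indicesOf A) = subPre a A := by
  rw [subPre_subPre, inter_eq_right.2 h]

lemma conPre_subPre_of_subset (h : A ⊆ S) :
    conPre (subPre a S) (S.indicesOf A) = subPre (conPre a A) (Aᶜ.indicesOf S) := by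
  rw [subPre_conPre, conPre_subPre, inter_eq_right.2 h, inter_comm]

lemma conPre_conPre_of_subset (h : A ⊆ S) :
    conPre (conPre a A) (Aᶜ.indicesOf S) = conPre a S := by
  rw [conPre_conPre, classMin_map_classMin, ← conRel_union, inter_comm, ← sdiff_eq_inter_compl,
    union_sdiff_of_subset h, inter_eq_right.2 (compl_subset_compl.2 h)]
  rfl

end

lemma mk_subPre_map (a : PreTAG) (e : ℕ ≃ ℕ) (S : Finset (Fin a.ne)) :
    (⟦subPre (a.map e) S⟧ : TAGQ) = ⟦subPre a S⟧ :=
  mk_map_of_injOn (a := subPre a S) e.injective.injOn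

lemma mk_conPre_map (a : PreTAG) (e : ℕ ≃ ℕ) (S : Finset (Fin a.ne)) :
    (⟦conPre (a.map e) S⟧ : TAGQ) = ⟦conPre a S⟧ := by
  have hg : classMin (Relation.Map (conRel a S) e e) ∘ e =
      (classMin (Relation.Map (conRel a S) e e) ∘ e) ∘ classMin (conRel a S) :=
    funext fun v => ((classMin_map_equiv_eq_iff e).2 (classMin_classMin _ v)).symm
  have hinj : Set.InjOn (classMin (Relation.Map (conRel a S) e e) ∘ e)
      (Set.range (classMin (conRel a S))) := by
    rintro _ ⟨x, rfl⟩ _ ⟨y, rfl⟩ hxy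
    simpa only [classMin_classMin] using (classMin_map_equiv_eq_iff e).1 hxy
  rw [conPre_map, hg, ← map_map]
  exact mk_map_of_injOn (hinj.mono (vertices_map_subset _ _))

theorem sum_triples_subPre_eq_sum_triples_conPre {M : Type*} [AddCommMonoid M] (a : PreTAG)
    (F : PreTAG → PreTAG → PreTAG → M) :
    ∑ S : Finset (Fin a.ne), ∑ T : Finset (Fin (subPre a S).ne),
        F (subPre (subPre a S) T) (conPre (subPre a S) T) (conPre a S) =
      ∑ A : Finset (Fin a.ne), ∑ T : Finset (Fin (conPre a A).ne),
        F (subPre a A) (subPre (conPre a A) T) (conPre (conPre a A) T) := by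
  calc _ = ∑ S : Finset (Fin a.ne), ∑ A ∈ S.powerset,
          F (subPre a A) (subPre (conPre a A) (Aᶜ.indicesOf S)) (conPre a S) := by
        refine sum_congr rfl fun S _ => (sum_indicesOf_powerset S _).trans ?_
        refine sum_congr rfl fun A hA => ?_
        have hAS := mem_powerset.1 hA
        rw [subPre_subPre_of_subset hAS, conPre_subPre_of_subset hAS]
    _ = ∑ A : Finset (Fin a.ne), ∑ S with A ⊆ S,
          F (subPre a A) (subPre (conPre a A) (Aᶜ.indicesOf S)) (conPre a S) :=
        sum_comm' fun S A => by simp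
    _ = _ := by
        refine sum_congr rfl fun A _ => ((sum_indicesOf_compl A _).trans ?_).symm
        refine sum_congr rfl fun S hS => ?_
        rw [conPre_conPre_of_subset (mem_filter.1 hS).2]

end PreTAG

section Coproduct

open PreTAG

variable (K : Type) [Field K]

noncomputable def deltaPre (a : PreTAG) : HT K ⊗[K] HT K :=
  ∑ S : Finset (Fin a.ne),
    Finsupp.single (⟦subPre a S⟧ : TAGQ) (1 : K) ⊗ₜ Finsupp.single (⟦conPre a S⟧ : TAGQ) (1 : K)

lemma deltaPre_map (e : ℕ ≃ ℕ) (a : PreTAG) : deltaPre K (a.map e) = deltaPre K a := by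
  refine Fintype.sum_congr _ _ fun S => ?_
  rw [mk_subPre_map a e S, mk_conPre_map a e S]

lemma deltaPre_eq_of_tagRel {a b : PreTAG} (h : TagRel a b) : deltaPre K a = deltaPre K b := by
  obtain ⟨hm, e, he⟩ := h
  rw [← ext_of_ends (a := a.map e) hm he, deltaPre_map]

lemma deltaH_single (g : TAGQ) (c : K) : deltaH K (Finsupp.single g c) = c • deltaT K g := by
  simp [deltaH]

lemma deltaH_single_mk (a : PreTAG) (c : K) :
    deltaH K (Finsupp.single ⟦a⟧ c) = c • deltaPre K a :=
  (deltaH_single K ⟦a⟧ c).trans (congrArg (c • ·) (deltaPre_eq_of_tagRel K (Quotient.mk_out a)))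

end Coproduct

theorem tag_coproduct_coassoc_general (K : Type) [Field K] :
    (TensorProduct.assoc K (HT K) (HT K) (HT K)).toLinearMap ∘ₗ
        TensorProduct.map (deltaH K) LinearMap.id ∘ₗ deltaH K =
      TensorProduct.map LinearMap.id (deltaH K) ∘ₗ deltaH K := by
  refine Finsupp.lhom_ext fun g c => ?_
  induction g using Quotient.inductionOn with
  | h a =>
    simp only [LinearMap.comp_apply, deltaH_single_mk, one_smul, deltaPre, map_smul,
      map_sum, TensorProduct.map_tmul, LinearMap.id_coe, id_eq, TensorProduct.sum_tmul,
      TensorProduct.tmul_sum, LinearEquiv.coe_coe, TensorProduct.assoc_tmul]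
    exact congrArg (c • ·) (PreTAG.sum_triples_subPre_eq_sum_triples_conPre a fun x y z =>
      Finsupp.single (⟦x⟧ : TAGQ) (1 : K) ⊗ₜ[K]
        (Finsupp.single (⟦y⟧ : TAGQ) (1 : K) ⊗ₜ[K] Finsupp.single (⟦z⟧ : TAGQ) (1 : K)))

/-- The coproduct `Δ` on the space `H` of TAGs, defined by
`Δ(Γ,μ) = Σ_{(γ,ν) ⊆ (Γ,μ)} (γ,ν) ⊗ (Γ/γ, μ/ν)`, is coassociative:
`(Δ ⊗ Id) ∘ Δ = (Id ⊗ Δ) ∘ Δ`. -/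
theorem tag_coproduct_coassoc (K : Type) [Field K] [CharZero K] :
    (TensorProduct.assoc K (HT K) (HT K) (HT K)).toLinearMap ∘ₗ
        TensorProduct.map (deltaH K) LinearMap.id ∘ₗ deltaH K =
      TensorProduct.map LinearMap.id (deltaH K) ∘ₗ deltaH K :=
  tag_coproduct_coassoc_general K
end
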